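/- arXiv:0804.2473 — 5 statements merged into one kernel-verified Lean document; each statement's English description precedes it below -/
import Mathlib

section
/- Let N be a K×K positive definite Hermitian complex matrix (K ≥ 1) with Cholesky factorization N = L Lᴴ, where L is lower triangular with strictly positive real diagonal entries, and let λ₁(N) ≥ … ≥ λ_K(N) denote the (real, positive) eigenvalues of N in nonincreasing order. Then the vector l = (ln L₁₁², …, ln L_KK²) is majorized by the vector (ln λ₁(N), …, ln λ_K(N)). -/
/-!
For `S = {s₁ < ⋯ < sₘ}`, the principal submatrix `N[S,S]` is the Gram matrix `L[S,:] L[S,:]ᴴ`, so by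
Cauchy–Binet its determinant is a sum of squared `m × m` minors of `L[S,:]`; one of them is the
lower triangular `L[S,S]`, whence `∏_{k ∈ S} L_kk² ≤ det N[S,S]`. Writing `N = U D Uᴴ`, Cauchy–Binet
again expresses `det N[S,S]` as a convex combination of the products `∏_{i ∈ T} λᵢ` over
`m`-subsets `T` (the weights `|det U[S,T]|²` sum to `det (U[S,:] U[S,:]ᴴ) = 1`), so it is at most
the product of the `m` largest eigenvalues. Taking logarithms gives the partial-sum inequalities,
and `det N = ∏ L_kk² = ∏ λᵢ` gives equality of the totals.
-/

open Matrix BigOperators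
open scoped ComplexOrder

/-- `a` is majorized by `b` (written `a ≺ b`): after sorting both vectors in
nonincreasing order, every partial sum of `a` is bounded above by the
corresponding partial sum of `b`, and the total sums agree. -/
def IsMajorizedBy {K : ℕ} (a b : Fin K → ℝ) : Prop :=
  ∃ σ τ : Equiv.Perm (Fin K),
    Antitone (a ∘ σ) ∧ Antitone (b ∘ τ) ∧
    (∀ j : ℕ, j < K →
      ∑ i ∈ Finset.univ.filter (fun i : Fin K => (i : ℕ) ≤ j), a (σ i) ≤
        ∑ i ∈ Finset.univ.filter (fun i : Fin K => (i : ℕ) ≤ j), b (τ i)) ∧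
    (∑ i, a i) = (∑ i, b i)

open Finset

theorem Fin.val_le_val_of_strictMono {m n : ℕ} {f : Fin m → Fin n} (hf : StrictMono f)
    (i : Fin m) : (i : ℕ) ≤ f i := by
  rw [← Fin.card_Iio i, ← Fin.card_Iio (f i)]
  exact card_le_card_of_injOn f (fun j hj => by simpa using hf (by simpa using hj))
    hf.injective.injOn

namespace Finset

theorem prod_orderEmbOfFin {α M : Type*} [LinearOrder α] [CommMonoid M]
    (s : Finset α) {k : ℕ} (h : s.card = k) (f : α → M) :
    ∏ i, f (s.orderEmbOfFin h i) = ∏ x ∈ s, f x := by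
  conv_rhs => rw [← map_orderEmbOfFin_univ s h]
  rw [prod_map]
  rfl

theorem injOn_orderEmbOfFin_comp {m n : ℕ} :
    Set.InjOn (fun sσ : {s : Finset (Fin n) // s.card = m} × Equiv.Perm (Fin m) =>
      ⇑(sσ.1.1.orderEmbOfFin sσ.1.2) ∘ ⇑sσ.2) Set.univ := by
  rintro ⟨⟨s, hs⟩, σ⟩ - ⟨⟨t, ht⟩, τ⟩ - h
  have hst : s = t := by
    have := congrArg Set.range h
    simp only [Set.range_comp, Set.range_eq_univ.2 σ.surjective, Set.range_eq_univ.2 τ.surjective,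
      Set.image_univ, range_orderEmbOfFin] at this
    exact_mod_cast this
  subst hst
  exact Prod.ext rfl (Equiv.ext fun i => (s.orderEmbOfFin hs).injective (congrFun h i))

theorem exists_orderEmbOfFin_comp_eq {m n : ℕ} {p : Fin m → Fin n} (hp : Function.Injective p) :
    ∃ (s : {s : Finset (Fin n) // s.card = m}) (σ : Equiv.Perm (Fin m)),
      ⇑(s.1.orderEmbOfFin s.2) ∘ ⇑σ = p := by
  have hcard : (univ.image p).card = m := by simp [card_image_of_injective _ hp]
  have hmem (i : Fin m) : p i ∈ Set.range ((univ.image p).orderEmbOfFin hcard) := by simp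
  choose σ hσ using hmem
  have hσinj : Function.Injective σ := fun i j hij => hp (by rw [← hσ i, ← hσ j, hij])
  exact ⟨⟨_, hcard⟩, Equiv.ofBijective σ hσinj.bijective_of_finite, funext hσ⟩

end Finset

namespace Matrix

variable {R : Type*} [CommRing R] {m n : ℕ}

theorem det_mul_eq_sum_det_submatrix_mul_prod (A : Matrix (Fin m) (Fin n) R)
    (B : Matrix (Fin n) (Fin m) R) :
    det (A * B) = ∑ p : Fin m → Fin n, det (A.submatrix id p) * ∏ i, B (p i) i := by
  simp only [det_apply', mul_apply, prod_univ_sum, sum_mul, Fintype.piFinset_univ, submatrix_apply,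
    id, mul_sum]
  rw [sum_comm]
  refine sum_congr rfl fun p _ => sum_congr rfl fun σ _ => ?_
  rw [prod_mul_distrib, mul_assoc]

/-- **Cauchy–Binet formula**. -/
theorem det_mul_eq_sum_det_mul_det (A : Matrix (Fin m) (Fin n) R) (B : Matrix (Fin n) (Fin m) R) :
    det (A * B) = ∑ s : {s : Finset (Fin n) // s.card = m},
      det (A.submatrix id (s.1.orderEmbOfFin s.2)) *
        det (B.submatrix (s.1.orderEmbOfFin s.2) id) := by
  set f : (Fin m → Fin n) → R := fun p => det (A.submatrix id p) * ∏ i, B (p i) i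
  have hf_noninj (p : Fin m → Fin n) (hp : ¬ Function.Injective p) : f p = 0 := by
    obtain ⟨i, j, hij, hne⟩ : ∃ i j, p i = p j ∧ i ≠ j := by
      simpa [Function.Injective] using hp
    have hdet : det (A.submatrix id p) = 0 := det_zero_of_column_eq hne fun k => by simp [hij]
    simp [f, hdet]
  have hf_comp (s : {s : Finset (Fin n) // s.card = m}) (σ : Equiv.Perm (Fin m)) :
      f (s.1.orderEmbOfFin s.2 ∘ σ) = det (A.submatrix id (s.1.orderEmbOfFin s.2)) *
        (Equiv.Perm.sign σ * ∏ i, B (s.1.orderEmbOfFin s.2 (σ i)) i) := by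
    have hsub : A.submatrix id (s.1.orderEmbOfFin s.2 ∘ σ) =
        (A.submatrix id (s.1.orderEmbOfFin s.2)).submatrix id σ := rfl
    simp only [f, hsub, det_permute', Function.comp_apply]
    ring
  -- Non-injective `p` contribute nothing; the injective ones are the `s.orderEmbOfFin _ ∘ σ`.
  rw [det_mul_eq_sum_det_submatrix_mul_prod, ← sum_filter_of_ne (p := Function.Injective)
    fun p _ h => by_contra fun hp => h (hf_noninj p hp)]
  simp_rw [det_apply' (B.submatrix _ id), submatrix_apply, id, mul_sum, ← hf_comp]
  rw [← Fintype.sum_prod_type', eq_comm]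
  refine sum_nbij (fun sσ => sσ.1.1.orderEmbOfFin sσ.1.2 ∘ sσ.2) ?_ ?_ ?_ fun _ _ => rfl
  · simp [(orderEmbOfFin _ _).injective.comp (Equiv.injective _)]
  · simpa using injOn_orderEmbOfFin_comp
  · intro p hp
    obtain ⟨s, σ, rfl⟩ := exists_orderEmbOfFin_comp_eq (by simpa using hp)
    exact ⟨(s, σ), mem_univ _, rfl⟩

variable {𝕜 : Type*} [RCLike 𝕜]

theorem det_mul_conjTranspose_eq_sum_norm_sq (A : Matrix (Fin m) (Fin n) 𝕜) :
    det (A * Aᴴ) = ∑ s : {s : Finset (Fin n) // s.card = m},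
      ((‖det (A.submatrix id (s.1.orderEmbOfFin s.2))‖ ^ 2 : ℝ) : 𝕜) := by
  rw [det_mul_eq_sum_det_mul_det]
  refine sum_congr rfl fun s _ => ?_
  rw [← conjTranspose_submatrix, det_conjTranspose, RCLike.star_def, RCLike.mul_conj]
  push_cast
  rfl

theorem IsLowerTriangular.det_mul_conjTranspose {L : Matrix (Fin n) (Fin n) 𝕜}
    (hL : L.IsLowerTriangular) : det (L * Lᴴ) = ((∏ i, ‖L i i‖ ^ 2 : ℝ) : 𝕜) := by
  rw [det_mul, det_conjTranspose, RCLike.star_def, RCLike.mul_conj, det_of_isLowerTriangular L hL,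
    norm_prod, prod_pow]
  push_cast
  rfl

theorem IsLowerTriangular.prod_norm_sq_diag_le_re_det_submatrix_mul_conjTranspose
    {L : Matrix (Fin n) (Fin n) 𝕜} (hL : L.IsLowerTriangular) {e : Fin m → Fin n}
    (he : StrictMono e) :
    ∏ i, ‖L (e i) (e i)‖ ^ 2 ≤ RCLike.re (det ((L * Lᴴ).submatrix e e)) := by
  set S : Finset (Fin n) := univ.map ⟨e, he.injective⟩
  have hS : S.card = m := by simp [S]
  have heS : ⇑(S.orderEmbOfFin hS) = e := (orderEmbOfFin_unique hS (by simp [S]) he).symm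
  have hsub : (L * Lᴴ).submatrix e e = L.submatrix e id * (L.submatrix e id)ᴴ := by
    rw [submatrix_mul _ _ _ id _ Function.bijective_id, conjTranspose_submatrix]
  have hdet : det (L.submatrix e e) = ∏ i, L (e i) (e i) :=
    det_of_isLowerTriangular _ fun i j hij => hL (he hij)
  rw [hsub, det_mul_conjTranspose_eq_sum_norm_sq, ← RCLike.ofReal_sum, RCLike.ofReal_re]
  refine (le_of_eq ?_).trans (single_le_sum (fun s _ => sq_nonneg _)
    (mem_univ (⟨S, hS⟩ : {s : Finset (Fin n) // s.card = m})))
  rw [heS, submatrix_submatrix, Function.id_comp, Function.comp_id, hdet, norm_prod, prod_pow]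

theorem sum_norm_sq_det_submatrix_eq_one {U : Matrix (Fin n) (Fin n) 𝕜}
    (hU : U ∈ unitaryGroup (Fin n) 𝕜) {e : Fin m → Fin n} (he : Function.Injective e) :
    ∑ s : {s : Finset (Fin n) // s.card = m},
      ‖det (U.submatrix e (s.1.orderEmbOfFin s.2))‖ ^ 2 = 1 := by
  have hUe : U.submatrix e id * (U.submatrix e id)ᴴ = 1 := by
    rw [conjTranspose_submatrix, ← submatrix_mul _ _ _ _ _ Function.bijective_id,
      ← star_eq_conjTranspose, mem_unitaryGroup_iff.1 hU, submatrix_one _ he]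
  have := det_mul_conjTranspose_eq_sum_norm_sq (U.submatrix e id)
  rw [hUe, det_one] at this
  exact_mod_cast this.symm

theorem IsHermitian.det_submatrix_eq_sum_prod_eigenvalues_mul {N : Matrix (Fin n) (Fin n) 𝕜}
    (hN : N.IsHermitian) (e : Fin m → Fin n) :
    det (N.submatrix e e) = ∑ s : {s : Finset (Fin n) // s.card = m},
      (((∏ i ∈ s.1, hN.eigenvalues i) *
        ‖det ((hN.eigenvectorUnitary : Matrix (Fin n) (Fin n) 𝕜).submatrix e
          (s.1.orderEmbOfFin s.2))‖ ^ 2 : ℝ) : 𝕜) := by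
  set U : Matrix (Fin n) (Fin n) 𝕜 := ↑hN.eigenvectorUnitary
  set μ := hN.eigenvalues
  set A : Matrix (Fin m) (Fin n) 𝕜 := U.submatrix e id
  have hN' : N.submatrix e e = A * (diagonal (fun i => (μ i : 𝕜)) * Aᴴ) := by
    conv_lhs => rw [hN.spectral_theorem]
    rw [Unitary.conjStarAlgAut_apply, mul_assoc, submatrix_mul _ _ _ id _ Function.bijective_id,
      submatrix_mul _ _ _ id _ Function.bijective_id, submatrix_id_id, star_eq_conjTranspose,
      conjTranspose_submatrix]
    rfl
  rw [hN', det_mul_eq_sum_det_mul_det]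
  refine sum_congr rfl fun s _ => ?_
  have hB : (diagonal (fun i => (μ i : 𝕜)) * Aᴴ).submatrix (s.1.orderEmbOfFin s.2) id =
      diagonal (fun i => (μ (s.1.orderEmbOfFin s.2 i) : 𝕜)) *
        (A.submatrix id (s.1.orderEmbOfFin s.2))ᴴ := by
    ext i j
    simp only [submatrix_apply, diagonal_mul, conjTranspose_apply, id]
  rw [hB, det_mul, det_diagonal, det_conjTranspose, RCLike.star_def, mul_left_comm,
    RCLike.mul_conj, submatrix_submatrix, ← prod_orderEmbOfFin s.1 s.2]
  push_cast
  rfl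

theorem IsHermitian.exists_re_det_submatrix_le_prod_eigenvalues {N : Matrix (Fin n) (Fin n) 𝕜}
    (hN : N.IsHermitian) {e : Fin m → Fin n} (he : Function.Injective e) :
    ∃ T : Finset (Fin n), T.card = m ∧
      RCLike.re (det (N.submatrix e e)) ≤ ∏ i ∈ T, hN.eigenvalues i := by
  set c : {s : Finset (Fin n) // s.card = m} → ℝ := fun s => ∏ i ∈ s.1, hN.eigenvalues i
  set w : {s : Finset (Fin n) // s.card = m} → ℝ := fun s =>
    ‖det ((hN.eigenvectorUnitary : Matrix (Fin n) (Fin n) 𝕜).submatrix e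
      (s.1.orderEmbOfFin s.2))‖ ^ 2
  have hw : ∑ s, w s = 1 := sum_norm_sq_det_submatrix_eq_one hN.eigenvectorUnitary.2 he
  obtain ⟨s, -, hmax⟩ := exists_max_image univ c (nonempty_of_sum_ne_zero (hw ▸ one_ne_zero))
  refine ⟨s.1, s.2, ?_⟩
  rw [hN.det_submatrix_eq_sum_prod_eigenvalues_mul, ← RCLike.ofReal_sum, RCLike.ofReal_re]
  calc ∑ t, c t * w t ≤ ∑ t, c s * w t :=
        sum_le_sum fun t _ => mul_le_mul_of_nonneg_right (hmax t (mem_univ t)) (sq_nonneg _)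
    _ = c s := by rw [← mul_sum, hw, mul_one]

end Matrix

theorem Antitone.prod_le_prod_val_lt_card {n : ℕ} {R : Type*} [CommMonoidWithZero R] [Preorder R]
    [ZeroLEOneClass R] [PosMulMono R] {f : Fin n → R} (hf : Antitone f) (hf0 : ∀ i, 0 ≤ f i)
    (T : Finset (Fin n)) :
    ∏ i ∈ T, f i ≤ ∏ i ∈ univ.filter (fun i : Fin n => (i : ℕ) < T.card), f i := by
  have hT : T.card ≤ n := by simpa using card_le_univ T
  have hprefix :
      univ.filter (fun i : Fin n => (i : ℕ) < T.card) = univ.map (Fin.castLEEmb hT) := by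
    ext i
    simp only [mem_filter, mem_univ, true_and, mem_map, Fin.castLEEmb_apply]
    exact ⟨fun hi => ⟨⟨i, hi⟩, rfl⟩, by rintro ⟨j, rfl⟩; exact j.2⟩
  rw [hprefix, prod_map, ← prod_orderEmbOfFin T rfl]
  exact prod_le_prod (fun _ _ => hf0 _) fun i _ =>
    hf (Fin.le_def.2 (Fin.val_le_val_of_strictMono (T.orderEmbOfFin rfl).strictMono i))

theorem isMajorizedBy_of_sum_le {K : ℕ} {a b : Fin K → ℝ} (hb : Antitone b)
    (hsum : ∀ S : Finset (Fin K),
      ∑ i ∈ S, a i ≤ ∑ i ∈ univ.filter (fun i : Fin K => (i : ℕ) < S.card), b i)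
    (htotal : ∑ i, a i = ∑ i, b i) : IsMajorizedBy a b := by
  set σ := Tuple.sort (OrderDual.toDual ∘ a)
  refine ⟨σ, 1, monotone_toDual_comp_iff.1 (Tuple.monotone_sort _), hb, fun j hj => ?_, htotal⟩
  have hprefix : univ.filter (fun i : Fin K => (i : ℕ) ≤ j) = Iic ⟨j, hj⟩ := by
    ext i
    simp [Fin.le_def]
  have hcard : ((Iic ⟨j, hj⟩).map σ.toEmbedding).card = j + 1 := by simp
  rw [hprefix]
  calc ∑ i ∈ Iic ⟨j, hj⟩, a (σ i) = ∑ i ∈ (Iic ⟨j, hj⟩).map σ.toEmbedding, a i := by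
        rw [sum_map]
        rfl
    _ ≤ ∑ i ∈ univ.filter (fun i : Fin K => (i : ℕ) < j + 1), b i := hcard ▸ hsum _
    _ = ∑ i ∈ Iic ⟨j, hj⟩, b ((1 : Equiv.Perm (Fin K)) i) := by
        simp only [Nat.lt_succ_iff, hprefix, Equiv.Perm.coe_one, id]

theorem isMajorizedBy_log_of_prod_le {K : ℕ} {x y : Fin K → ℝ} (hx : ∀ i, 0 < x i)
    (hy : ∀ i, 0 < y i) (hy_anti : Antitone y)
    (hprod : ∀ S : Finset (Fin K),
      ∏ i ∈ S, x i ≤ ∏ i ∈ univ.filter (fun i : Fin K => (i : ℕ) < S.card), y i)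
    (htotal : ∏ i, x i = ∏ i, y i) :
    IsMajorizedBy (fun i => Real.log (x i)) (fun i => Real.log (y i)) := by
  have hlog_prod (f : Fin K → ℝ) (hf : ∀ i, 0 < f i) (s : Finset (Fin K)) :
      ∑ i ∈ s, Real.log (f i) = Real.log (∏ i ∈ s, f i) :=
    (Real.log_prod fun i _ => (hf i).ne').symm
  refine isMajorizedBy_of_sum_le (fun i j hij => Real.log_le_log (hy j) (hy_anti hij))
    (fun S => ?_) ?_
  · rw [hlog_prod x hx, hlog_prod y hy]
    exact Real.log_le_log (prod_pos fun i _ => hx i) (hprod S)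
  · rw [hlog_prod x hx, hlog_prod y hy, htotal]

theorem log_cholesky_diag_isMajorizedBy_log_eigenvalues_general
    {K : ℕ} (N L : Matrix (Fin K) (Fin K) ℂ)
    (hNpd : N.PosDef)
    (hLtri : ∀ i j : Fin K, i < j → L i j = 0)
    (hLdiag : ∀ i : Fin K, 0 < (L i i).re ∧ (L i i).im = 0)
    (hChol : N = L * Lᴴ)
    (lam : Fin K → ℝ) (hlam_anti : Antitone lam)
    (hlam : ∃ σ : Equiv.Perm (Fin K), lam = hNpd.isHermitian.eigenvalues ∘ σ) :
    IsMajorizedBy (fun k : Fin K => Real.log ((L k k).re ^ 2))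
      (fun k : Fin K => Real.log (lam k)) := by
  obtain ⟨σ, rfl⟩ := hlam
  subst hChol
  have hL : L.IsLowerTriangular := fun i j hij => hLtri i j hij
  have hnorm (k : Fin K) : ‖L k k‖ ^ 2 = (L k k).re ^ 2 := by
    rw [← Complex.abs_re_eq_norm.2 (hLdiag k).2, sq_abs]
  set μ := hNpd.isHermitian.eigenvalues
  refine isMajorizedBy_log_of_prod_le (fun k => pow_pos (hLdiag k).1 2)
    (fun i => hNpd.eigenvalues_pos _) hlam_anti (fun S => ?_) ?_
  · set e := S.orderEmbOfFin rfl
    obtain ⟨T, hT, hdet⟩ :=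
      hNpd.isHermitian.exists_re_det_submatrix_le_prod_eigenvalues e.injective
    calc ∏ k ∈ S, (L k k).re ^ 2 = ∏ i, ‖L (e i) (e i)‖ ^ 2 := by
          rw [← prod_orderEmbOfFin S rfl]
          simp only [hnorm]
          rfl
      _ ≤ RCLike.re (det ((L * Lᴴ).submatrix e e)) :=
          hL.prod_norm_sq_diag_le_re_det_submatrix_mul_conjTranspose e.strictMono
      _ ≤ ∏ i ∈ T, μ i := hdet
      _ = ∏ i ∈ T.map σ.symm.toEmbedding, (μ ∘ σ) i := by simp [prod_map]
      _ ≤ ∏ i ∈ univ.filter (fun i : Fin K => (i : ℕ) < S.card), (μ ∘ σ) i := by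
          simpa [hT] using hlam_anti.prod_le_prod_val_lt_card
            (fun i => (hNpd.eigenvalues_pos _).le) (T.map σ.symm.toEmbedding)
  · have hdet := hNpd.isHermitian.det_eq_prod_eigenvalues
    rw [hL.det_mul_conjTranspose] at hdet
    simp_rw [← hnorm, Function.comp_apply, Equiv.prod_comp σ μ]
    exact_mod_cast hdet

/-- If `N` is a `K × K` positive definite Hermitian complex
matrix (`K ≥ 1`) with Cholesky factorization `N = L Lᴴ` (`L` lower triangular
with strictly positive real diagonal entries), and `lam` lists the (real,
positive) eigenvalues of `N` in nonincreasing order, then the vector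
`l = (ln L₁₁², …, ln L_KK²)` is majorized by `(ln lam 1, …, ln lam K)`. -/
theorem log_cholesky_diag_isMajorizedBy_log_eigenvalues
    {K : ℕ} (hK : 1 ≤ K) (N L : Matrix (Fin K) (Fin K) ℂ)
    (hNpd : N.PosDef)
    (hLtri : ∀ i j : Fin K, i < j → L i j = 0)
    (hLdiag : ∀ i : Fin K, 0 < (L i i).re ∧ (L i i).im = 0)
    (hChol : N = L * Lᴴ)
    (lam : Fin K → ℝ) (hlam_anti : Antitone lam)
    (hlam : ∃ σ : Equiv.Perm (Fin K), lam = hNpd.isHermitian.eigenvalues ∘ σ) :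
    IsMajorizedBy (fun k : Fin K => Real.log ((L k k).re ^ 2))
      (fun k : Fin K => Real.log (lam k)) :=
  log_cholesky_diag_isMajorizedBy_log_eigenvalues_general N L hNpd hLtri hLdiag hChol lam hlam_anti
    hlam
end

section
/- Let N be a K×K positive definite Hermitian complex matrix with Cholesky factorization N = L Lᴴ (L lower triangular with strictly positive real diagonal), let l = (ln L₁₁², …, ln L_KK²), let λ₁(N) ≥ … ≥ λ_K(N) be the eigenvalues of N in nonincreasing order, and let g : ℝ^K → ℝ be Schur-concave. Then g(ln λ₁(N), …, ln λ_K(N)) ≤ g(l). -/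
open Matrix BigOperators
open scoped ComplexOrder

/-- A function `g : ℝ^K → ℝ` is Schur-concave if `a ≺ b` implies `g a ≥ g b`. -/
def SchurConcave {K : ℕ} (g : (Fin K → ℝ) → ℝ) : Prop :=
  ∀ a b : Fin K → ℝ, IsMajorizedBy a b → g b ≤ g a

/-!
After taking logarithms the claim is that the squared Cholesky diagonal is log-majorized by the
spectrum: the product of any `k` of the numbers `L i i ^ 2` is at most the product of the `k`
largest eigenvalues, and the full products agree (both are `det N`). For an index set `S` of size
`k` the principal minor `det N[S,S]` lies in between, by Cauchy–Binet applied to two factorizations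
of `N[S,S]`. From `N[S,S] = X Xᴴ` with `X = L[S,:]`, the minor is a sum of squared `k × k` minors
of `X`, one of which is the triangular `L[S,S]`, with determinant `∏ i ∈ S, L i i`. From
`N[S,S] = V D Vᴴ`, where `V` consists of the rows `S` of a unitary eigenvector matrix and `D` is the
diagonal of eigenvalues, it is an average of products of `k` eigenvalues with weights
`‖det V[:,T]‖²`, which sum to `det (V Vᴴ) = 1`.
-/

open Finset

section ProdExchange

variable {ι R : Type*} [CommMonoidWithZero R] [PartialOrder R] [ZeroLEOneClass R] [PosMulMono R]
  {f : ι → R} {s t : Finset ι}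

theorem Finset.prod_le_prod_of_card_eq_of_forall_le (hst : #s = #t) (h0 : ∀ i ∈ s, 0 ≤ f i)
    (hle : ∀ i ∈ s, ∀ j ∈ t, f i ≤ f j) : ∏ i ∈ s, f i ≤ ∏ j ∈ t, f j := by
  let e := equivOfCardEq hst
  calc ∏ i ∈ s, f i = ∏ i : s, f i := (prod_coe_sort s f).symm
    _ ≤ ∏ i : s, f (e i) := prod_le_prod (fun i _ => h0 i i.2) fun i _ => hle i i.2 _ (e i).2
    _ = ∏ j : t, f j := e.prod_comp fun j => f j
    _ = ∏ j ∈ t, f j := prod_coe_sort t f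

theorem Finset.prod_le_prod_of_card_eq_of_forall_notMem_le [DecidableEq ι] (hst : #s = #t)
    (h0 : ∀ i, 0 ≤ f i) (htop : ∀ i ∈ t, ∀ j ∉ t, f j ≤ f i) :
    ∏ i ∈ s, f i ≤ ∏ i ∈ t, f i := by
  have hexchange : ∏ i ∈ s \ t, f i ≤ ∏ j ∈ t \ s, f j := by
    refine prod_le_prod_of_card_eq_of_forall_le (card_sdiff_comm hst) (fun i _ => h0 i) ?_
    intro i hi j hj
    rw [mem_sdiff] at hi hj
    exact htop j hj.1 i hi.2
  rw [← prod_inter_mul_prod_sdiff s t, ← prod_inter_mul_prod_sdiff t s, inter_comm]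
  exact mul_le_mul_of_nonneg_left hexchange (prod_nonneg fun i _ => h0 i)

end ProdExchange

namespace Matrix

variable {m n R : Type*} [Fintype m] [DecidableEq m] [Fintype n]

section CauchyBinet

variable [CommRing R]

theorem det_mul_eq_sum_prod_mul_det_submatrix (A : Matrix m n R) (B : Matrix n m R) :
    (A * B).det = ∑ p : m → n, (∏ i, A i (p i)) * (B.submatrix p id).det := by
  have hrows : A * B = of fun i => ∑ k, A i k • B k := by
    ext i j
    simp [mul_apply]
  rw [hrows, det]
  exact (detRowAlternating.toMultilinearMap.map_sum _).trans
    (sum_congr rfl fun p _ => detRowAlternating.toMultilinearMap.map_smul_univ _ _)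

/-- Cauchy–Binet, summed over all maps `p : m → n` rather than over increasing injections: every
`m × m` minor is counted `(card m)!` times, and non-injective `p` contribute `0`. -/
theorem factorial_mul_det_mul (A : Matrix m n R) (B : Matrix n m R) :
    ((Fintype.card m).factorial : R) * (A * B).det =
      ∑ p : m → n, (A.submatrix id p).det * (B.submatrix p id).det := by
  have hperm (σ : Equiv.Perm m) : (A * B).det =
      ∑ p : m → n, (Equiv.Perm.sign σ * ∏ i, A i (p (σ i))) * (B.submatrix p id).det := by
    rw [det_mul_eq_sum_prod_mul_det_submatrix]
    refine Fintype.sum_equiv (Equiv.arrowCongr σ (Equiv.refl n)) _ _ fun p => ?_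
    set q := Equiv.arrowCongr σ (Equiv.refl n) p
    have hq (i : m) : q (σ i) = p i := by simp [q]
    have hB : B.submatrix p id = (B.submatrix q id).submatrix σ id := by
      ext i j; simp [hq]
    rw [hB, det_permute]
    simp only [hq]
    ring
  calc ((Fintype.card m).factorial : R) * (A * B).det
      = ∑ σ : Equiv.Perm m, (A * B).det := by simp [Fintype.card_perm]
    _ = ∑ p : m → n, (∑ σ : Equiv.Perm m, Equiv.Perm.sign σ * ∏ i, A i (p (σ i))) *
          (B.submatrix p id).det := by
      simp_rw [sum_mul]
      rw [sum_comm]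
      exact sum_congr rfl fun σ _ => hperm σ
    _ = ∑ p : m → n, (A.submatrix id p).det * (B.submatrix p id).det := by
      refine sum_congr rfl fun p _ => ?_
      rw [← det_transpose (A.submatrix id p), det_apply' (A.submatrix id p)ᵀ]
      rfl

end CauchyBinet

section Gram

variable [DecidableEq n]

theorem factorial_mul_det_mul_diagonal_mul_conjTranspose (X : Matrix m n ℂ) (d : n → ℝ) :
    ((Fintype.card m).factorial : ℂ) * (X * diagonal (fun k => (d k : ℂ)) * Xᴴ).det =
      ((∑ p : m → n, Complex.normSq (X.submatrix id p).det * ∏ i, d (p i) : ℝ) : ℂ) := by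
  rw [factorial_mul_det_mul]
  push_cast
  refine sum_congr rfl fun p _ => ?_
  have hcols : (X * diagonal fun k => (d k : ℂ)).submatrix id p =
      X.submatrix id p * diagonal fun i => (d (p i) : ℂ) := by
    ext i j
    simp
  rw [hcols, det_mul, det_diagonal, ← conjTranspose_submatrix, det_conjTranspose,
    ← Complex.mul_conj]
  simp only [Complex.star_def]
  ring

theorem factorial_mul_det_mul_conjTranspose (X : Matrix m n ℂ) :
    ((Fintype.card m).factorial : ℂ) * (X * Xᴴ).det =
      ((∑ p : m → n, Complex.normSq (X.submatrix id p).det : ℝ) : ℂ) := by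
  simpa using factorial_mul_det_mul_diagonal_mul_conjTranspose X 1

theorem factorial_mul_normSq_det_submatrix_le_sum (X : Matrix m n ℂ) {e : m → n}
    (he : Function.Injective e) :
    (Fintype.card m).factorial * Complex.normSq (X.submatrix id e).det ≤
      ∑ p : m → n, Complex.normSq (X.submatrix id p).det := by
  have hperm (σ : Equiv.Perm m) :
      Complex.normSq (X.submatrix id (e ∘ σ)).det = Complex.normSq (X.submatrix id e).det := by
    rw [show X.submatrix id (e ∘ σ) = (X.submatrix id e).submatrix id σ from rfl, det_permute',
      map_mul, Complex.normSq_intCast, ← Int.cast_mul, ← Units.val_mul, Int.units_mul_self]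
    simp
  calc (Fintype.card m).factorial * Complex.normSq (X.submatrix id e).det
      = ∑ σ : Equiv.Perm m, Complex.normSq (X.submatrix id (e ∘ σ)).det := by
        simp [hperm, Fintype.card_perm]
    _ = ∑ p ∈ univ.image fun σ : Equiv.Perm m => e ∘ σ, Complex.normSq (X.submatrix id p).det := by
        have hinj : Function.Injective fun σ : Equiv.Perm m => e ∘ σ :=
          fun σ τ h => Equiv.ext fun i => he (congrFun h i)
        rw [sum_image hinj.injOn]
    _ ≤ ∑ p : m → n, Complex.normSq (X.submatrix id p).det :=
        sum_le_sum_of_subset_of_nonneg (subset_univ _)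
          fun p _ _ => Complex.normSq_nonneg _

end Gram

section LowerTriangular

variable [DecidableEq n] [LinearOrder n]

theorem normSq_det_of_isLowerTriangular {L : Matrix n n ℂ} (hL : L.IsLowerTriangular) :
    Complex.normSq L.det = ∏ k, Complex.normSq (L k k) := by
  rw [det_of_isLowerTriangular L hL, map_prod]

theorem det_mul_conjTranspose_of_isLowerTriangular {L : Matrix n n ℂ} (hL : L.IsLowerTriangular) :
    (L * Lᴴ).det = ((∏ k, Complex.normSq (L k k) : ℝ) : ℂ) := by
  rw [det_mul, det_conjTranspose, ← normSq_det_of_isLowerTriangular hL, ← Complex.mul_conj]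
  rfl

theorem prod_normSq_le_det_submatrix_mul_conjTranspose {L : Matrix n n ℂ}
    (hL : L.IsLowerTriangular) (s : Finset n) :
    ((∏ k ∈ s, Complex.normSq (L k k) : ℝ) : ℂ) ≤
      ((L * Lᴴ).submatrix ((↑) : s → n) (↑)).det := by
  set X := L.submatrix ((↑) : s → n) id
  have hX : (L * Lᴴ).submatrix ((↑) : s → n) (↑) = X * Xᴴ := by
    ext i j
    simp [X, mul_apply]
  have hminor : Complex.normSq (X.submatrix id (↑)).det = ∏ k ∈ s, Complex.normSq (L k k) := by
    have hLs : (L.submatrix ((↑) : s → n) (↑)).IsLowerTriangular := fun _ _ h => hL h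
    rw [show X.submatrix id Subtype.val = L.submatrix Subtype.val Subtype.val from rfl,
      normSq_det_of_isLowerTriangular hLs]
    exact prod_coe_sort s fun k => Complex.normSq (L k k)
  have hfac : (0 : ℂ) < (Fintype.card s).factorial := by exact_mod_cast Nat.factorial_pos _
  refine le_of_mul_le_mul_left ?_ hfac
  rw [hX, factorial_mul_det_mul_conjTranspose, ← hminor]
  exact_mod_cast factorial_mul_normSq_det_submatrix_le_sum X Subtype.val_injective

end LowerTriangular

theorem PosSemidef.det_submatrix_le_prod [DecidableEq n] {N : Matrix n n ℂ} (hN : N.PosSemidef)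
    {lam : n → ℝ} (hlam : ∃ σ : Equiv.Perm n, lam = hN.isHermitian.eigenvalues ∘ σ)
    {s t : Finset n} (hst : #s = #t) (htop : ∀ i ∈ t, ∀ j ∉ t, lam j ≤ lam i) :
    (N.submatrix ((↑) : s → n) (↑)).det ≤ ((∏ i ∈ t, lam i : ℝ) : ℂ) := by
  obtain ⟨σ, rfl⟩ := hlam
  set E := hN.isHermitian.eigenvalues
  set U : Matrix n n ℂ := (hN.isHermitian.eigenvectorUnitary : Matrix n n ℂ)
  set V := U.submatrix ((↑) : s → n) id
  have hNs : N.submatrix ((↑) : s → n) (↑) = V * diagonal (fun k => (E k : ℂ)) * Vᴴ := by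
    rw [hN.isHermitian.spectral_theorem, Unitary.conjStarAlgAut_apply]
    ext i j
    simp [V, U, E, mul_apply, star_eq_conjTranspose, Function.comp_def]
  have hV : V * Vᴴ = 1 := by
    have hU : U * Uᴴ = 1 := Unitary.mul_star_self_of_mem hN.isHermitian.eigenvectorUnitary.2
    rw [← submatrix_one_embedding (Function.Embedding.subtype (· ∈ s)), ← hU]
    ext i j
    simp [V, mul_apply]
  have hweights : ∑ p : s → n, Complex.normSq (V.submatrix id p).det =
      (Fintype.card s).factorial := by
    have := factorial_mul_det_mul_conjTranspose V
    rw [hV, det_one, mul_one] at this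
    exact_mod_cast this.symm
  have hterm (p : s → n) : Complex.normSq (V.submatrix id p).det * ∏ i, E (p i) ≤
      Complex.normSq (V.submatrix id p).det * ∏ i ∈ t, E (σ i) := by
    by_cases hp : Function.Injective p
    · refine mul_le_mul_of_nonneg_left ?_ (Complex.normSq_nonneg _)
      have hp' : Function.Injective (σ.symm ∘ p) := σ.symm.injective.comp hp
      calc ∏ i, E (p i) = ∏ k ∈ univ.image (σ.symm ∘ p), E (σ k) := by
            rw [prod_image hp'.injOn]; simp
        _ ≤ ∏ i ∈ t, E (σ i) := by
          refine prod_le_prod_of_card_eq_of_forall_notMem_le ?_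
            (fun i => hN.eigenvalues_nonneg _) htop
          rw [card_image_of_injective _ hp', card_univ, Fintype.card_coe, hst]
    · obtain ⟨i, j, hij, hne⟩ := Function.not_injective_iff.mp hp
      rw [det_zero_of_column_eq hne fun k => by simp [hij]]
      simp
  have hfac : (0 : ℂ) < (Fintype.card s).factorial := by exact_mod_cast Nat.factorial_pos _
  refine le_of_mul_le_mul_left ?_ hfac
  rw [hNs, factorial_mul_det_mul_diagonal_mul_conjTranspose]
  calc ((∑ p : s → n, Complex.normSq (V.submatrix id p).det * ∏ i, E (p i) : ℝ) : ℂ)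
      ≤ ((∑ p : s → n, Complex.normSq (V.submatrix id p).det * ∏ i ∈ t, E (σ i) : ℝ) : ℂ) :=
        Complex.real_le_real.mpr (sum_le_sum fun p _ => hterm p)
    _ = _ := by rw [← sum_mul, hweights]; simp

end Matrix

theorem isMajorizedBy_of_sum_le_s3 {K : ℕ} {a b : Fin K → ℝ}
    (hle : ∀ s t : Finset (Fin K), #s = #t → (∀ i ∈ t, ∀ j ∉ t, b j ≤ b i) →
      ∑ i ∈ s, a i ≤ ∑ i ∈ t, b i)
    (hsum : ∑ i, a i = ∑ i, b i) : IsMajorizedBy a b := by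
  have hsort (c : Fin K → ℝ) : Antitone (c ∘ Tuple.sort (OrderDual.toDual ∘ c)) :=
    monotone_toDual_comp_iff.mp (Tuple.monotone_sort _)
  set σ := Tuple.sort (OrderDual.toDual ∘ a)
  set τ := Tuple.sort (OrderDual.toDual ∘ b)
  refine ⟨σ, τ, hsort a, hsort b, fun j _ => ?_, hsum⟩
  set F := univ.filter fun i : Fin K => (i : ℕ) ≤ j
  have htop : ∀ i ∈ F.map τ.toEmbedding, ∀ k ∉ F.map τ.toEmbedding, b k ≤ b i := by
    intro i hi k hk
    obtain ⟨i', hi', rfl⟩ := mem_map.mp hi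
    rw [← τ.apply_symm_apply k] at hk ⊢
    have hk' : τ.symm k ∉ F := fun h => hk (mem_map_of_mem _ h)
    simp only [F, mem_filter, mem_univ, true_and, not_le] at hi' hk'
    exact hsort b (Fin.le_def.mpr (by omega))
  simpa using hle (F.map σ.toEmbedding) (F.map τ.toEmbedding) (by simp) htop

theorem isMajorizedBy_log_of_prod_le_s3 {K : ℕ} {a b : Fin K → ℝ} (ha : ∀ i, 0 < a i)
    (hb : ∀ i, 0 < b i)
    (hle : ∀ s t : Finset (Fin K), #s = #t → (∀ i ∈ t, ∀ j ∉ t, b j ≤ b i) →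
      ∏ i ∈ s, a i ≤ ∏ i ∈ t, b i)
    (hprod : ∏ i, a i = ∏ i, b i) :
    IsMajorizedBy (fun i => Real.log (a i)) (fun i => Real.log (b i)) := by
  refine isMajorizedBy_of_sum_le_s3 (fun s t hst htop => ?_) ?_
  · rw [← Real.log_prod fun i _ => (ha i).ne', ← Real.log_prod fun i _ => (hb i).ne']
    refine Real.log_le_log (prod_pos fun i _ => ha i) (hle s t hst fun i hi j hj => ?_)
    exact (Real.log_le_log_iff (hb j) (hb i)).mp (htop i hi j hj)
  · rw [← Real.log_prod fun i _ => (ha i).ne', ← Real.log_prod fun i _ => (hb i).ne', hprod]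

theorem schurConcave_log_eigenvalues_le_general
    {K : ℕ} (N L : Matrix (Fin K) (Fin K) ℂ)
    (hNpd : N.PosDef)
    (hLtri : ∀ i j : Fin K, i < j → L i j = 0)
    (hLdiag : ∀ i : Fin K, 0 < (L i i).re ∧ (L i i).im = 0)
    (hChol : N = L * Lᴴ)
    (lam : Fin K → ℝ)
    (hlam : ∃ σ : Equiv.Perm (Fin K), lam = hNpd.isHermitian.eigenvalues ∘ σ)
    (g : (Fin K → ℝ) → ℝ) (hg : SchurConcave g) :
    g (fun k : Fin K => Real.log (lam k)) ≤
      g (fun k : Fin K => Real.log ((L k k).re ^ 2)) := by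
  have hL : L.IsLowerTriangular := fun i j hij => hLtri i j hij
  have hLsq (k : Fin K) : (L k k).re ^ 2 = Complex.normSq (L k k) := by
    rw [Complex.normSq_apply, (hLdiag k).2]; ring
  have hprod_le (s t : Finset (Fin K)) (hst : #s = #t) (htop : ∀ i ∈ t, ∀ j ∉ t, lam j ≤ lam i) :
      ∏ k ∈ s, (L k k).re ^ 2 ≤ ∏ i ∈ t, lam i := by
    simp only [hLsq, ← Complex.real_le_real]
    exact (hChol ▸ prod_normSq_le_det_submatrix_mul_conjTranspose hL s).trans
      (hNpd.posSemidef.det_submatrix_le_prod hlam hst htop)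
  obtain ⟨σ, rfl⟩ := hlam
  have hprod_eq : ∏ k, (L k k).re ^ 2 = ∏ i, hNpd.isHermitian.eigenvalues (σ i) := by
    rw [← Complex.ofReal_inj, Equiv.prod_comp σ]
    simp only [hLsq]
    rw [← det_mul_conjTranspose_of_isLowerTriangular hL, ← hChol,
      hNpd.isHermitian.det_eq_prod_eigenvalues]
    simp
  exact hg _ _ (isMajorizedBy_log_of_prod_le_s3 (fun k => pow_pos (hLdiag k).1 2)
    (fun i => hNpd.eigenvalues_pos (σ i)) hprod_le hprod_eq)

/-- Let `N = L Lᴴ` be the Cholesky factorization of a `K × K`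
positive definite Hermitian complex matrix, `l = (ln L₁₁², …, ln L_KK²)`, let
`lam` list the eigenvalues of `N` in nonincreasing order, and let `g` be
Schur-concave.  Then `g (ln lam₁, …, ln lam_K) ≤ g l`. -/
theorem schurConcave_log_eigenvalues_le
    {K : ℕ} (N L : Matrix (Fin K) (Fin K) ℂ)
    (hNpd : N.PosDef)
    (hLtri : ∀ i j : Fin K, i < j → L i j = 0)
    (hLdiag : ∀ i : Fin K, 0 < (L i i).re ∧ (L i i).im = 0)
    (hChol : N = L * Lᴴ)
    (lam : Fin K → ℝ) (hlam_anti : Antitone lam)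
    (hlam : ∃ σ : Equiv.Perm (Fin K), lam = hNpd.isHermitian.eigenvalues ∘ σ)
    (g : (Fin K → ℝ) → ℝ) (hg : SchurConcave g) :
    g (fun k : Fin K => Real.log (lam k)) ≤
      g (fun k : Fin K => Real.log ((L k k).re ^ 2)) :=
  schurConcave_log_eigenvalues_le_general N L hNpd hLtri hLdiag hChol lam hlam g hg
end

section
/- Let H be an N_r×N_t complex matrix with rank(H) ≥ K ≥ 1, let λ₁ ≥ … ≥ λ_K > 0 be the K largest eigenvalues of HᴴH, let U₁ be an N_t×K matrix whose columns are orthonormal eigenvectors of HᴴH corresponding to λ₁, …, λ_K, and let P_total > 0. Then for every N_t×K complex matrix P with tr(PᴴP) ≤ P_total, det(Pᴴ Hᴴ H P) ≤ (P_total/K)^K · ∏_{i=1}^K λ_i (in particular this determinant is a nonnegative real number); moreover, for every K×K unitary matrix V, the matrix P = √(P_total/K) · U₁ V satisfies tr(PᴴP) = P_total and achieves equality. -/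
/-!
Diagonalise `HᴴH = W diag(e) Wᴴ` and put `Q = Wᴴ P`. By the Cauchy–Binet formula,
`det (Pᴴ HᴴH P) = ∑_S (∏_{t ∈ S} e_t) |det Q_S|²` and `det (PᴴP) = ∑_S |det Q_S|²`, the sums
running over the `K × K` row-minors `Q_S` of `Q`. Every product of `K` distinct eigenvalues is
at most `∏ λ_i`, so `det (Pᴴ HᴴH P) ≤ (∏ λ_i) det (PᴴP)`, and AM–GM on the eigenvalues of `PᴴP`
gives `det (PᴴP) ≤ (tr (PᴴP) / K)^K ≤ (P_total / K)^K`. For `P = √(P_total/K) U₁ V` one has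
`PᴴP = (P_total/K) • 1` and `Pᴴ HᴴH P = (P_total/K) • Vᴴ diag(λ) V`.
-/

open Matrix BigOperators Finset Function
open scoped ComplexOrder

section CauchyBinet

variable {R : Type*} [CommRing R]

theorem Matrix.det_mul_eq_sum_prod_mul_det_submatrix_s4 {m n : Type*} [Fintype m] [DecidableEq m]
    [Fintype n] [DecidableEq n] (A : Matrix m n R) (B : Matrix n m R) :
    (A * B).det = ∑ f : m → n, (∏ i, B (f i) i) * (A.submatrix id f).det := by
  simp only [det_apply', mul_apply, prod_univ_sum, Fintype.piFinset_univ, mul_sum,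
    submatrix_apply, id]
  rw [sum_comm]
  refine sum_congr rfl fun f _ => sum_congr rfl fun σ _ => ?_
  rw [prod_mul_distrib]
  ring

theorem Matrix.det_mul_eq_sum_injective {m n : Type*} [Fintype m] [DecidableEq m]
    [Fintype n] [DecidableEq n] (A : Matrix m n R) (B : Matrix n m R) :
    (A * B).det = ∑ f with Injective f, (∏ i, B (f i) i) * (A.submatrix id f).det := by
  rw [det_mul_eq_sum_prod_mul_det_submatrix_s4, sum_filter]
  refine sum_congr rfl fun f _ => ?_
  split_ifs with hf
  · rfl
  · obtain ⟨i, j, hij, hne⟩ := not_injective_iff.mp hf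
    rw [det_zero_of_column_eq hne fun r => by simp [hij], mul_zero]

-- An injective tuple `f` factors uniquely as `g ∘ σ` with `g = f ∘ sort f` strictly monotone
-- and `σ = (sort f)⁻¹`.
theorem Finset.sum_injective_eq_sum_strictMono_sum_perm {α M : Type*} [LinearOrder α] [Fintype α]
    [AddCommMonoid M] {k : ℕ} (F : (Fin k → α) → M) :
    ∑ f with Injective f, F f =
      ∑ g with StrictMono g, ∑ σ : Equiv.Perm (Fin k), F (g ∘ σ) := by
  rw [← sum_product']
  refine sum_nbij' (fun f => (f ∘ Tuple.sort f, (Tuple.sort f)⁻¹)) (fun p => p.1 ∘ p.2)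
    ?_ ?_ ?_ ?_ ?_
  · intro f hf
    simp only [mem_filter_univ] at hf
    simp only [mem_product, mem_filter_univ, mem_univ, and_true]
    exact (Tuple.monotone_sort f).strictMono_of_injective (hf.comp (Tuple.sort f).injective)
  · rintro ⟨g, σ⟩ hp
    simp only [mem_product, mem_filter_univ] at hp
    simp only [mem_filter_univ]
    exact hp.1.injective.comp σ.injective
  · intro f _
    simp [comp_assoc, Equiv.Perm.inv_def]
  · rintro ⟨g, σ⟩ hp
    simp only [mem_product, mem_filter_univ] at hp
    have hsort : Tuple.sort (g ∘ σ) = σ⁻¹ := by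
      have h := Tuple.comp_perm_comp_sort_eq_comp_sort (f := g) (σ := σ)
      rw [Tuple.sort_eq_refl_iff_monotone.mpr hp.1.monotone] at h
      refine eq_inv_of_mul_eq_one_right (Equiv.ext fun i => hp.1.injective ?_)
      simpa using congrFun h i
    simp [hsort, comp_assoc, Equiv.Perm.inv_def]
  · intro f _
    simp [comp_assoc, Equiv.Perm.inv_def]

/-- The Cauchy–Binet formula. -/
theorem Matrix.det_mul_eq_sum_strictMono {k n : ℕ} (A : Matrix (Fin k) (Fin n) R)
    (B : Matrix (Fin n) (Fin k) R) :
    (A * B).det = ∑ g with StrictMono g, (A.submatrix id g).det * (B.submatrix g id).det := by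
  rw [det_mul_eq_sum_injective, sum_injective_eq_sum_strictMono_sum_perm]
  refine sum_congr rfl fun g _ => ?_
  have hperm (σ : Equiv.Perm (Fin k)) : (A.submatrix id (g ∘ σ)).det =
      Equiv.Perm.sign σ * (A.submatrix id g).det := by
    rw [← det_permute', submatrix_submatrix, comp_id]
  simp only [hperm, det_apply' (B.submatrix g id), submatrix_apply, id, mul_sum]
  refine sum_congr rfl fun σ _ => ?_
  simp only [comp_def]
  ring

theorem Matrix.det_conjTranspose_mul_diagonal_mul [StarRing R] {k n : ℕ}
    (X : Matrix (Fin n) (Fin k) R) (d : Fin n → R) :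
    (Xᴴ * diagonal d * X).det =
      ∑ g with StrictMono g,
        (∏ i, d (g i)) * (star (X.submatrix g id).det * (X.submatrix g id).det) := by
  rw [det_mul_eq_sum_strictMono]
  refine sum_congr rfl fun g _ => ?_
  have hsub : (Xᴴ * diagonal d).submatrix id g = (X.submatrix g id)ᴴ * diagonal (d ∘ g) := by
    ext i j
    simp [mul_diagonal]
  rw [hsub, det_mul, det_conjTranspose, det_diagonal]
  simp only [comp_def]
  ring

end CauchyBinet

theorem Matrix.re_det_conjTranspose_mul_diagonal_mul_le {k n : ℕ} (X : Matrix (Fin n) (Fin k) ℂ)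
    {d : Fin n → ℝ} {c : ℝ}
    (hc : ∀ g : Fin k → Fin n, StrictMono g → ∏ i, d (g i) ≤ c) :
    (Xᴴ * diagonal (fun t => (d t : ℂ)) * X).det.re ≤ c * (Xᴴ * X).det.re := by
  have hre (w : Fin n → ℝ) : (Xᴴ * diagonal (fun t => (w t : ℂ)) * X).det.re =
      ∑ g with StrictMono g, (∏ i, w (g i)) * Complex.normSq (X.submatrix g id).det := by
    rw [det_conjTranspose_mul_diagonal_mul, Complex.re_sum]
    refine sum_congr rfl fun g _ => ?_
    rw [Complex.star_def, ← Complex.normSq_eq_conj_mul_self, ← Complex.ofReal_prod,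
      ← Complex.ofReal_mul, Complex.ofReal_re]
  have hone : Xᴴ * X = Xᴴ * diagonal (fun _ : Fin n => ((1 : ℝ) : ℂ)) * X := by
    rw [Complex.ofReal_one, diagonal_one, Matrix.mul_one]
  rw [hone, hre, hre, mul_sum]
  refine sum_le_sum fun g hg => ?_
  simp only [prod_const_one, one_mul]
  exact mul_le_mul_of_nonneg_right (hc g ((mem_filter_univ g).mp hg)) (Complex.normSq_nonneg _)

theorem Fin.castLE_le_of_strictMono {k n : ℕ} (h : k ≤ n) {g : Fin k → Fin n}
    (hg : StrictMono g) (i : Fin k) : Fin.castLE h i ≤ g i := by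
  suffices ∀ m (hm : m < k), m ≤ g ⟨m, hm⟩ from this i i.2
  intro m hm
  induction m with
  | zero => exact Nat.zero_le _
  | succ m ih => exact (ih (by omega)).trans_lt (hg (a := ⟨m, by omega⟩) (Nat.lt_succ_self m))

theorem Antitone.prod_comp_le_prod_castLE {n : ℕ} {mu : Fin n → ℝ} (hmu : Antitone mu)
    {k : ℕ} (h : k ≤ n) (hmu0 : ∀ t, 0 ≤ mu t) {g : Fin k → Fin n} (hg : Injective g) :
    ∏ i, mu (g i) ≤ ∏ i, mu (Fin.castLE h i) := by
  have hsorted : StrictMono (g ∘ Tuple.sort g) :=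
    (Tuple.monotone_sort g).strictMono_of_injective (hg.comp (Tuple.sort g).injective)
  rw [← Equiv.prod_comp (Tuple.sort g)]
  exact prod_le_prod (fun _ _ => hmu0 _)
    fun i _ => hmu (Fin.castLE_le_of_strictMono h hsorted i)

theorem Real.prod_le_sum_div_card_pow {ι : Type*} [Fintype ι] {ν : ι → ℝ}
    (hν : ∀ i, 0 ≤ ν i) :
    ∏ i, ν i ≤ ((∑ i, ν i) / Fintype.card ι) ^ Fintype.card ι := by
  rcases isEmpty_or_nonempty ι with hι | hι
  · simp
  have hcard : (0 : ℝ) < Fintype.card ι := by exact_mod_cast Fintype.card_pos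
  have hamgm := Real.geom_mean_le_arith_mean_weighted univ
    (fun _ => (Fintype.card ι : ℝ)⁻¹) ν (fun _ _ => by positivity) (by simp [hcard.ne'])
    fun i _ => hν i
  rw [← mul_sum, inv_mul_eq_div] at hamgm
  calc ∏ i, ν i = (∏ i, ν i ^ (Fintype.card ι : ℝ)⁻¹) ^ Fintype.card ι := by
        rw [← prod_pow]
        refine prod_congr rfl fun i _ => ?_
        rw [← Real.rpow_natCast, ← Real.rpow_mul (hν i), inv_mul_cancel₀ hcard.ne',
          Real.rpow_one]
    _ ≤ ((∑ i, ν i) / Fintype.card ι) ^ Fintype.card ι :=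
        pow_le_pow_left₀ (prod_nonneg fun i _ => Real.rpow_nonneg (hν i) _) hamgm _

theorem Matrix.PosSemidef.re_det_conjTranspose_mul_mul_le {k n : ℕ} (h : k ≤ n)
    {A : Matrix (Fin n) (Fin n) ℂ} (hA : A.PosSemidef) {mu : Fin n → ℝ} (hmu : Antitone mu)
    (hσ : ∃ σ : Equiv.Perm (Fin n), mu = hA.1.eigenvalues ∘ σ)
    (P : Matrix (Fin n) (Fin k) ℂ) :
    (Pᴴ * A * P).det.re ≤ (∏ i, mu (Fin.castLE h i)) * (Pᴴ * P).det.re := by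
  obtain ⟨σ, rfl⟩ := hσ
  set W : Matrix (Fin n) (Fin n) ℂ := hA.1.eigenvectorUnitary.val
  have hW : W * star W = 1 := Unitary.mul_star_self_of_mem hA.1.eigenvectorUnitary.2
  have hPAP : Pᴴ * A * P =
      (star W * P)ᴴ * diagonal (fun t => (hA.1.eigenvalues t : ℂ)) * (star W * P) := by
    conv_lhs => rw [hA.1.spectral_theorem]
    simp [W, conjTranspose_mul, Matrix.mul_assoc, star_eq_conjTranspose, comp_def]
  have hPP : Pᴴ * P = (star W * P)ᴴ * (star W * P) := by
    rw [conjTranspose_mul, star_eq_conjTranspose, conjTranspose_conjTranspose, Matrix.mul_assoc,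
      ← Matrix.mul_assoc W, ← star_eq_conjTranspose, hW, Matrix.one_mul]
  rw [hPAP, hPP]
  refine re_det_conjTranspose_mul_diagonal_mul_le _ fun g hg => ?_
  calc ∏ i, hA.1.eigenvalues (g i) = ∏ i, (hA.1.eigenvalues ∘ σ) (σ.symm (g i)) := by simp
    _ ≤ _ := hmu.prod_comp_le_prod_castLE h (fun _ => hA.eigenvalues_nonneg _)
        (σ.symm.injective.comp hg.injective)

theorem Matrix.PosSemidef.re_det_le_div_card_pow_of_re_trace_le {n 𝕜 : Type*} [Fintype n]
    [DecidableEq n] [RCLike 𝕜] {M : Matrix n n 𝕜} (hM : M.PosSemidef) {c : ℝ}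
    (hc : RCLike.re M.trace ≤ c) :
    RCLike.re M.det ≤ (c / Fintype.card n) ^ Fintype.card n := by
  rw [hM.1.det_eq_prod_eigenvalues, ← RCLike.ofReal_prod, RCLike.ofReal_re]
  rw [hM.1.trace_eq_sum_eigenvalues, ← RCLike.ofReal_sum, RCLike.ofReal_re] at hc
  calc ∏ i, hM.1.eigenvalues i
      ≤ ((∑ i, hM.1.eigenvalues i) / Fintype.card n) ^ Fintype.card n :=
        Real.prod_le_sum_div_card_pow hM.eigenvalues_nonneg
    _ ≤ (c / Fintype.card n) ^ Fintype.card n := by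
        gcongr
        exact div_nonneg (sum_nonneg fun i _ => hM.eigenvalues_nonneg i) (Nat.cast_nonneg _)

theorem Matrix.ofReal_sqrt_smul_conjTranspose_mul_mul_smul {m n : Type*} [Fintype m]
    {x : ℝ} (hx : 0 ≤ x) (M : Matrix m n ℂ) (N : Matrix m m ℂ) :
    ((√x : ℂ) • M)ᴴ * N * ((√x : ℂ) • M) = (x : ℂ) • (Mᴴ * N * M) := by
  rw [conjTranspose_smul, Complex.star_def, Complex.conj_ofReal, Matrix.smul_mul, Matrix.smul_mul,
    Matrix.mul_smul, smul_smul, ← Complex.ofReal_mul, Real.mul_self_sqrt hx]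

theorem Matrix.conjTranspose_mul_mul_self_eq_one {R m k : Type*} [CommRing R] [StarRing R]
    [Fintype m] [Fintype k] [DecidableEq k] {U : Matrix m k R} (hU : Uᴴ * U = 1)
    {V : Matrix k k R} (hV : V ∈ unitaryGroup k R) :
    (U * V)ᴴ * (U * V) = 1 := by
  rw [conjTranspose_mul, Matrix.mul_assoc, ← Matrix.mul_assoc Uᴴ, hU, Matrix.one_mul,
    ← star_eq_conjTranspose, mem_unitaryGroup_iff'.mp hV]

theorem Matrix.det_conjTranspose_mul_mul_of_mul_eq_mul_diagonal {R m k : Type*} [CommRing R]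
    [StarRing R] [Fintype m] [Fintype k] [DecidableEq k] {U : Matrix m k R} (hU : Uᴴ * U = 1)
    {A : Matrix m m R} {d : k → R} (hAU : A * U = U * diagonal d) {V : Matrix k k R}
    (hV : V ∈ unitaryGroup k R) :
    ((U * V)ᴴ * A * (U * V)).det = ∏ i, d i := by
  have hconj : (U * V)ᴴ * A * (U * V) = Vᴴ * diagonal d * V := calc
    _ = Vᴴ * (Uᴴ * (A * U)) * V := by simp only [conjTranspose_mul, Matrix.mul_assoc]
    _ = Vᴴ * diagonal d * V := by rw [hAU, ← Matrix.mul_assoc Uᴴ, hU, Matrix.one_mul]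
  have hVV : Vᴴ.det * V.det = 1 := by
    rw [← det_mul, ← star_eq_conjTranspose, mem_unitaryGroup_iff'.mp hV, det_one]
  rw [hconj, det_mul, det_mul, det_diagonal]
  linear_combination (∏ i, d i) * hVV

theorem det_precoded_channel_le_and_unitary_optimal_general
    {Nr Nt K : ℕ} (hK : 1 ≤ K) (hKNt : K ≤ Nt)
    (H : Matrix (Fin Nr) (Fin Nt) ℂ)
    (lam : Fin K → ℝ) (hlam_pos : ∀ i, 0 < lam i)
    (mu : Fin Nt → ℝ) (hmu_anti : Antitone mu)
    (hA : (Hᴴ * H).IsHermitian)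
    (hmu : ∃ σ : Equiv.Perm (Fin Nt), mu = hA.eigenvalues ∘ σ)
    (hlam : ∀ i : Fin K, lam i = mu (Fin.castLE hKNt i))
    (U₁ : Matrix (Fin Nt) (Fin K) ℂ)
    (hU₁orth : U₁ᴴ * U₁ = 1)
    (hU₁eig : Hᴴ * H * U₁ = U₁ * Matrix.diagonal (fun i => (lam i : ℂ)))
    (Ptot : ℝ) (hPtot : 0 < Ptot) :
    (∀ P : Matrix (Fin Nt) (Fin K) ℂ, (Pᴴ * P).trace.re ≤ Ptot →
      (Pᴴ * Hᴴ * H * P).det.im = 0 ∧ 0 ≤ (Pᴴ * Hᴴ * H * P).det.re ∧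
        (Pᴴ * Hᴴ * H * P).det.re ≤ (Ptot / K) ^ K * ∏ i, lam i) ∧
    (∀ V : Matrix (Fin K) (Fin K) ℂ, V ∈ Matrix.unitaryGroup (Fin K) ℂ →
      (((Real.sqrt (Ptot / K) : ℂ) • (U₁ * V))ᴴ *
          ((Real.sqrt (Ptot / K) : ℂ) • (U₁ * V))).trace = (Ptot : ℂ) ∧
      (((Real.sqrt (Ptot / K) : ℂ) • (U₁ * V))ᴴ * Hᴴ * H *
          ((Real.sqrt (Ptot / K) : ℂ) • (U₁ * V))).det =
        (((Ptot / K) ^ K * ∏ i, lam i : ℝ) : ℂ)) := by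
  refine ⟨fun P hP => ?_, fun V hV => ?_⟩
  · have hdet : 0 ≤ (Pᴴ * Hᴴ * H * P).det := by
      simpa [conjTranspose_mul, Matrix.mul_assoc] using
        (posSemidef_conjTranspose_mul_self (H * P)).det_nonneg
    refine ⟨(Complex.nonneg_iff.mp hdet).2.symm, (Complex.nonneg_iff.mp hdet).1, ?_⟩
    calc (Pᴴ * Hᴴ * H * P).det.re = (Pᴴ * (Hᴴ * H) * P).det.re := by
          rw [Matrix.mul_assoc Pᴴ]
      _ ≤ (∏ i, lam i) * (Pᴴ * P).det.re := by
        simpa only [hlam] using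
          (posSemidef_conjTranspose_mul_self H).re_det_conjTranspose_mul_mul_le hKNt hmu_anti hmu P
      _ ≤ (∏ i, lam i) * (Ptot / K) ^ K := by
        gcongr
        · exact prod_nonneg fun i _ => (hlam_pos i).le
        · simpa using (posSemidef_conjTranspose_mul_self P).re_det_le_div_card_pow_of_re_trace_le hP
      _ = (Ptot / K) ^ K * ∏ i, lam i := mul_comm _ _
  · have hx : 0 ≤ Ptot / K := by positivity
    have hK₀ : (K : ℝ) ≠ 0 := Nat.cast_ne_zero.mpr (by omega)
    rw [Matrix.mul_assoc _ Hᴴ H, ofReal_sqrt_smul_conjTranspose_mul_mul_smul hx,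
      ← Matrix.mul_one ((((Ptot / K).sqrt : ℂ)) • (U₁ * V))ᴴ,
      ofReal_sqrt_smul_conjTranspose_mul_mul_smul hx, Matrix.mul_one,
      conjTranspose_mul_mul_self_eq_one hU₁orth hV, trace_smul, trace_one, det_smul,
      det_conjTranspose_mul_mul_of_mul_eq_mul_diagonal hU₁orth hU₁eig hV, Fintype.card_fin,
      smul_eq_mul]
    constructor
    · push_cast
      field_simp
    · push_cast
      rfl

/-- Let `H` be an `N_r × N_t` complex matrix with
`rank H ≥ K ≥ 1`, let `lam 1 ≥ … ≥ lam K > 0` be the `K` largest eigenvalues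
of `HᴴH`, let `U₁` have orthonormal columns that are eigenvectors of `HᴴH`
for these eigenvalues, and let `P_total > 0`.  Then every `N_t × K` precoder
`P` with `tr(PᴴP) ≤ P_total` satisfies
`det(Pᴴ Hᴴ H P) ≤ (P_total/K)^K ∏ lam i` (and this determinant is a
nonnegative real number); moreover, for every `K × K` unitary `V`, the matrix
`P = √(P_total/K) • U₁ V` meets the power constraint with equality and
achieves the bound with equality. -/
theorem det_precoded_channel_le_and_unitary_optimal
    {Nr Nt K : ℕ} (hK : 1 ≤ K) (hKNt : K ≤ Nt)
    (H : Matrix (Fin Nr) (Fin Nt) ℂ) (hrank : K ≤ H.rank)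
    (lam : Fin K → ℝ) (hlam_pos : ∀ i, 0 < lam i)
    (mu : Fin Nt → ℝ) (hmu_anti : Antitone mu)
    (hA : (Hᴴ * H).IsHermitian)
    (hmu : ∃ σ : Equiv.Perm (Fin Nt), mu = hA.eigenvalues ∘ σ)
    (hlam : ∀ i : Fin K, lam i = mu (Fin.castLE hKNt i))
    (U₁ : Matrix (Fin Nt) (Fin K) ℂ)
    (hU₁orth : U₁ᴴ * U₁ = 1)
    (hU₁eig : Hᴴ * H * U₁ = U₁ * Matrix.diagonal (fun i => (lam i : ℂ)))
    (Ptot : ℝ) (hPtot : 0 < Ptot) :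
    (∀ P : Matrix (Fin Nt) (Fin K) ℂ, (Pᴴ * P).trace.re ≤ Ptot →
      (Pᴴ * Hᴴ * H * P).det.im = 0 ∧ 0 ≤ (Pᴴ * Hᴴ * H * P).det.re ∧
        (Pᴴ * Hᴴ * H * P).det.re ≤ (Ptot / K) ^ K * ∏ i, lam i) ∧
    (∀ V : Matrix (Fin K) (Fin K) ℂ, V ∈ Matrix.unitaryGroup (Fin K) ℂ →
      (((Real.sqrt (Ptot / K) : ℂ) • (U₁ * V))ᴴ *
          ((Real.sqrt (Ptot / K) : ℂ) • (U₁ * V))).trace = (Ptot : ℂ) ∧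
      (((Real.sqrt (Ptot / K) : ℂ) • (U₁ * V))ᴴ * Hᴴ * H *
          ((Real.sqrt (Ptot / K) : ℂ) • (U₁ * V))).det =
        (((Ptot / K) ^ K * ∏ i, lam i : ℝ) : ℂ)) :=
  det_precoded_channel_le_and_unitary_optimal_general hK hKNt H lam hlam_pos mu hmu_anti hA hmu hlam
    U₁ hU₁orth hU₁eig Ptot hPtot
end

section
/- Let N be a K×K positive definite Hermitian complex matrix with Cholesky factorization N = L Lᴴ, where L is lower triangular with strictly positive real diagonal entries. Then: (i) for every K×K lower triangular complex matrix C with all diagonal entries equal to 1, and every k ∈ {1, …, K}, the k-th diagonal entry of C N Cᴴ satisfies (C N Cᴴ)_kk ≥ L_kk²; and (ii) the matrix C = Diag(L₁₁, …, L_KK) · L^{-1} is lower triangular with unit diagonal and satisfies C N Cᴴ = Diag(L₁₁², …, L_KK²), so it achieves the lower bound simultaneously for every k. -/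
/-!
Since `C N Cᴴ = (C L)(C L)ᴴ`, its `k`-th diagonal entry is the squared norm of the `k`-th row
of `C L`, and the diagonal entry of that row is `C_kk L_kk = L_kk` because both factors are
lower triangular; hence the bound `L_kk²`. For `C = D L⁻¹` with `D = Diag(L_kk)` one gets
`C N Cᴴ = D (L⁻¹ L)(L⁻¹ L)ᴴ Dᴴ = D Dᴴ`, and `L⁻¹` is lower triangular with diagonal `L_kk⁻¹`,
so `C` has unit diagonal.
-/

open Matrix
open scoped ComplexOrder

namespace Matrix

section Triangular

variable {m R : Type*} [Fintype m] [LinearOrder m]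

theorem IsLowerTriangular.mul_apply_diag [NonUnitalNonAssocSemiring R] {A B : Matrix m m R}
    (hA : A.IsLowerTriangular) (hB : B.IsLowerTriangular) (k : m) :
    (A * B) k k = A k k * B k k := by
  rw [mul_apply, Finset.sum_eq_single k]
  · intro j _ hjk
    rcases hjk.lt_or_gt with h | h
    · rw [hB (i := j) (j := k) h, mul_zero]
    · rw [hA (i := k) (j := j) h, zero_mul]
  · simp

theorem IsLowerTriangular.inv [CommRing R] {A : Matrix m m R} (hA : A.IsLowerTriangular) :
    A⁻¹.IsLowerTriangular := by
  by_cases hdet : IsUnit A.det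
  · have := A.invertibleOfIsUnitDet hdet
    exact blockTriangular_inv_of_blockTriangular hA
  · rw [nonsing_inv_apply_not_isUnit A hdet]
    exact blockTriangular_zero

variable [Field R] {A : Matrix m m R}

theorem IsLowerTriangular.isUnit_det (hA : A.IsLowerTriangular) (hdiag : ∀ i, A i i ≠ 0) :
    IsUnit A.det := by
  rw [det_of_isLowerTriangular A hA]
  exact (Finset.prod_ne_zero_iff.mpr fun i _ => hdiag i).isUnit

theorem IsLowerTriangular.inv_apply_diag (hA : A.IsLowerTriangular) (hdet : IsUnit A.det)
    (k : m) : A⁻¹ k k = (A k k)⁻¹ := by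
  have h := congr_fun₂ (nonsing_inv_mul A hdet) k k
  rw [hA.inv.mul_apply_diag hA, one_apply_eq] at h
  exact eq_inv_of_mul_eq_one_left h

end Triangular

section Gram

variable {m n 𝕜 : Type*} [Fintype n] [RCLike 𝕜]

theorem mul_conjTranspose_self_apply_self (M : Matrix m n 𝕜) (i : m) :
    (M * Mᴴ) i i = ((∑ j, ‖M i j‖ ^ 2 : ℝ) : 𝕜) := by
  simp [mul_apply, RCLike.mul_conj]

theorem sq_norm_le_re_mul_conjTranspose_self_apply_self (M : Matrix m n 𝕜) (i : m) (j : n) :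
    ‖M i j‖ ^ 2 ≤ RCLike.re ((M * Mᴴ) i i) := by
  rw [mul_conjTranspose_self_apply_self, RCLike.ofReal_re]
  exact Finset.single_le_sum (fun j _ => sq_nonneg ‖M i j‖) (Finset.mem_univ j)

theorem im_mul_conjTranspose_self_apply_self (M : Matrix m n 𝕜) (i : m) :
    RCLike.im ((M * Mᴴ) i i) = 0 := by
  rw [mul_conjTranspose_self_apply_self, RCLike.ofReal_im]

end Gram

end Matrix

theorem dfe_feedback_matrix_optimal_general
    {K : ℕ} (N L : Matrix (Fin K) (Fin K) ℂ)
    (hLtri : ∀ i j : Fin K, i < j → L i j = 0)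
    (hLdiag : ∀ i : Fin K, 0 < (L i i).re ∧ (L i i).im = 0)
    (hChol : N = L * Lᴴ) :
    (∀ C : Matrix (Fin K) (Fin K) ℂ,
      (∀ i j : Fin K, i < j → C i j = 0) → (∀ k : Fin K, C k k = 1) →
      ∀ k : Fin K, ((C * N * Cᴴ) k k).im = 0 ∧
        (L k k).re ^ 2 ≤ ((C * N * Cᴴ) k k).re) ∧
    (∀ i j : Fin K, i < j →
      (Matrix.diagonal (fun k => L k k) * L⁻¹) i j = 0) ∧
    (∀ k : Fin K, (Matrix.diagonal (fun k => L k k) * L⁻¹) k k = 1) ∧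
    (Matrix.diagonal (fun k => L k k) * L⁻¹) * N *
        (Matrix.diagonal (fun k => L k k) * L⁻¹)ᴴ =
      Matrix.diagonal (fun k => L k k ^ 2) := by
  have hL : L.IsLowerTriangular := fun i j h => hLtri i j h
  have hLne : ∀ k, L k k ≠ 0 := fun k h => by simpa [h] using (hLdiag k).1
  have hLdet := hL.isUnit_det hLne
  have hD : (diagonal fun k => L k k).IsLowerTriangular := blockTriangular_diagonal _
  refine ⟨fun C hC hC1 k => ?_, fun i j h => (hD.mul hL.inv) h, fun k => ?_, ?_⟩
  · have hCNC : C * N * Cᴴ = (C * L) * (C * L)ᴴ := by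
      rw [hChol, conjTranspose_mul]
      simp only [Matrix.mul_assoc]
    have hCLk : (C * L) k k = L k k := by
      rw [IsLowerTriangular.mul_apply_diag (fun i j h => hC i j h) hL, hC1, one_mul]
    rw [hCNC]
    refine ⟨im_mul_conjTranspose_self_apply_self (C * L) k, ?_⟩
    calc (L k k).re ^ 2 = ‖(C * L) k k‖ ^ 2 := by
          rw [hCLk, Complex.sq_norm, Complex.normSq_apply, (hLdiag k).2]; ring
      _ ≤ _ := sq_norm_le_re_mul_conjTranspose_self_apply_self (C * L) k k
  · rw [hD.mul_apply_diag hL.inv, diagonal_apply_eq, hL.inv_apply_diag hLdet,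
      mul_inv_cancel₀ (hLne k)]
  · calc _ = diagonal (fun k => L k k) * (L⁻¹ * L) * (L⁻¹ * L)ᴴ *
          (diagonal fun k => L k k)ᴴ := by
          rw [hChol, conjTranspose_mul, conjTranspose_mul]
          simp only [Matrix.mul_assoc]
      _ = diagonal fun k => L k k ^ 2 := by
          rw [nonsing_inv_mul L hLdet, conjTranspose_one, Matrix.mul_one, Matrix.mul_one,
            diagonal_conjTranspose, diagonal_mul_diagonal]
          congr 1
          funext k
          rw [Pi.star_apply, Complex.star_def, Complex.conj_eq_iff_im.mpr (hLdiag k).2, sq]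

/-- optimal DFE feedback matrix.  Let `N = L Lᴴ` be the
Cholesky factorization of a `K × K` positive definite Hermitian complex
matrix.  (i) For every lower triangular `C` with unit diagonal, each diagonal
entry of `C N Cᴴ` is a real number at least `L_kk²`.  (ii) The matrix
`C = Diag(L₁₁,…,L_KK) L⁻¹` is lower triangular with unit diagonal and
satisfies `C N Cᴴ = Diag(L₁₁²,…,L_KK²)`, achieving all the bounds
simultaneously. -/
theorem dfe_feedback_matrix_optimal
    {K : ℕ} (N L : Matrix (Fin K) (Fin K) ℂ)
    (hNpd : N.PosDef)
    (hLtri : ∀ i j : Fin K, i < j → L i j = 0)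
    (hLdiag : ∀ i : Fin K, 0 < (L i i).re ∧ (L i i).im = 0)
    (hChol : N = L * Lᴴ) :
    (∀ C : Matrix (Fin K) (Fin K) ℂ,
      (∀ i j : Fin K, i < j → C i j = 0) → (∀ k : Fin K, C k k = 1) →
      ∀ k : Fin K, ((C * N * Cᴴ) k k).im = 0 ∧
        (L k k).re ^ 2 ≤ ((C * N * Cᴴ) k k).re) ∧
    (∀ i j : Fin K, i < j →
      (Matrix.diagonal (fun k => L k k) * L⁻¹) i j = 0) ∧
    (∀ k : Fin K, (Matrix.diagonal (fun k => L k k) * L⁻¹) k k = 1) ∧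
    (Matrix.diagonal (fun k => L k k) * L⁻¹) * N *
        (Matrix.diagonal (fun k => L k k) * L⁻¹)ᴴ =
      Matrix.diagonal (fun k => L k k ^ 2) :=
  dfe_feedback_matrix_optimal_general N L hLtri hLdiag hChol
end

section
/- Let A be an N_t×N_t Hermitian positive semidefinite complex matrix with eigenvalues λ₁ ≥ … ≥ λ_{N_t} ≥ 0, let K ≤ N_t, and let U₁ be an N_t×K matrix whose columns are orthonormal eigenvectors of A corresponding to λ₁, …, λ_K. Then for every N_t×K complex matrix P̄ with orthonormal columns (P̄ᴴP̄ = I), det(P̄ᴴ A P̄) ≥ (∏_{i=1}^K λ_i) · det(P̄ᴴ U₁ U₁ᴴ P̄), where both determinants are nonnegative real numbers. -/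
/-! The columns of `U₁` span an `A`-invariant subspace, so the orthogonal projection
`P = U₁ U₁ᴴ` commutes with `A` and `A = P A P + (1 - P) A (1 - P) ⪰ P A P = U₁ D U₁ᴴ`,
where `D = diag(λ₁, …, λ_K)`. Compressing by `P̄` preserves the Loewner order, the determinant is
monotone on positive semidefinite matrices, and `det (P̄ᴴ U₁ D U₁ᴴ P̄) = det D · det (P̄ᴴ U₁ U₁ᴴ P̄)`.
-/

open Matrix BigOperators
open scoped ComplexOrder

/-- A star projection commuting with `a` splits it as `a = p a p + (1 - p) a (1 - p)`. -/
theorem IsStarProjection.mul_mul_le_of_commute {R : Type*} [Ring R] [PartialOrder R]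
    [StarRing R] [StarOrderedRing R] {p a : R} (hp : IsStarProjection p) (hpa : Commute p a)
    (ha : 0 ≤ a) : p * a * p ≤ a := by
  have hpap : p * a * p = p * a := by
    rw [mul_assoc, ← hpa.eq, ← mul_assoc, hp.isIdempotentElem.eq]
  have hsplit : a - p * a * p = (1 - p) * a * (1 - p) := by
    simp only [sub_mul, mul_sub, one_mul, mul_one, hpap, ← hpa.eq]
    abel
  rw [← sub_nonneg, hsplit]
  exact hp.one_sub.isSelfAdjoint.conjugate_nonneg ha

namespace Matrix

section StarRing

variable {m n α : Type*} [Fintype m] [Fintype n] [DecidableEq n] [CommRing α] [StarRing α]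

theorem isStarProjection_mul_conjTranspose {U : Matrix m n α} (hU : Uᴴ * U = 1) :
    IsStarProjection (U * Uᴴ) where
  isIdempotentElem := by
    rw [IsIdempotentElem, Matrix.mul_assoc, ← Matrix.mul_assoc Uᴴ, hU, Matrix.one_mul]
  isSelfAdjoint := by
    rw [IsSelfAdjoint, star_eq_conjTranspose, conjTranspose_mul, conjTranspose_conjTranspose]

theorem commute_mul_conjTranspose_of_mul_eq_mul {A : Matrix m m α} (hA : A.IsHermitian)
    {U : Matrix m n α} {D : Matrix n n α} (hU : Uᴴ * U = 1) (hAU : A * U = U * D) :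
    Commute (U * Uᴴ) A := by
  have hD : D = Uᴴ * A * U := by
    rw [Matrix.mul_assoc, hAU, ← Matrix.mul_assoc, hU, Matrix.one_mul]
  have hDH : Dᴴ = D := by
    rw [hD, conjTranspose_mul, conjTranspose_mul, conjTranspose_conjTranspose, hA.eq,
      Matrix.mul_assoc]
  have hUA : Uᴴ * A = D * Uᴴ := by
    rw [← hA.eq, ← conjTranspose_mul, hAU, conjTranspose_mul, hDH]
  rw [Commute, SemiconjBy, Matrix.mul_assoc, hUA, ← Matrix.mul_assoc, ← Matrix.mul_assoc, hAU]

end StarRing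

section RCLike

open scoped MatrixOrder

variable {m n 𝕜 : Type*} [Fintype m] [Fintype n] [DecidableEq n] [RCLike 𝕜]

omit [DecidableEq n] in
theorem conjTranspose_mul_mul_le_conjTranspose_mul_mul {X Y : Matrix n n 𝕜} (h : X ≤ Y)
    (B : Matrix n m 𝕜) : Bᴴ * X * B ≤ Bᴴ * Y * B := by
  rw [le_iff, ← Matrix.sub_mul, ← Matrix.mul_sub]
  exact (le_iff.mp h).conjTranspose_mul_mul_same B

theorem one_le_det_of_one_le {M : Matrix n n 𝕜} (h : 1 ≤ M) : 1 ≤ M.det := by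
  have hM : M.IsHermitian := by
    simpa using (le_iff.mp h).isHermitian.add (isHermitian_one : (1 : Matrix n n 𝕜).IsHermitian)
  have hspec := (algebraMap_le_iff_le_spectrum (r := (1 : ℝ)) hM.isSelfAdjoint).mp
    (by simpa using h)
  rw [hM.det_eq_prod_eigenvalues, ← RCLike.ofReal_prod, ← RCLike.ofReal_one,
    RCLike.ofReal_le_ofReal]
  exact Finset.one_le_prod fun i _ => hspec _ (hM.eigenvalues_mem_spectrum_real i)

/-- For invertible `Y`, conjugating by `Y^{-1/2}` gives `X = Y^{1/2} M Y^{1/2}` with `1 ≤ M`. -/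
theorem det_le_det_of_le {X Y : Matrix n n 𝕜} (hY : 0 ≤ Y) (h : Y ≤ X) : Y.det ≤ X.det := by
  by_cases hdet : Y.det = 0
  · rw [hdet]
    exact (hY.trans h).posSemidef.det_nonneg
  set L := CFC.sqrt Y
  have hLL : L * L = Y := CFC.sqrt_mul_sqrt_self Y
  have hL : IsUnit L.det := by
    refine isUnit_iff_ne_zero.mpr fun h0 => hdet ?_
    rw [← hLL, det_mul, h0, zero_mul]
  have hLinv : star L⁻¹ = L⁻¹ := by
    rw [star_eq_conjTranspose, conjTranspose_nonsing_inv, ← star_eq_conjTranspose,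
      (CFC.sqrt_nonneg Y).isSelfAdjoint.star_eq]
  have hM : 1 ≤ L⁻¹ * X * L⁻¹ := by
    calc (1 : Matrix n n 𝕜) = star L⁻¹ * Y * L⁻¹ := by
          rw [hLinv, ← hLL, Matrix.mul_assoc, Matrix.mul_assoc, mul_nonsing_inv _ hL,
            Matrix.mul_one, nonsing_inv_mul _ hL]
      _ ≤ star L⁻¹ * X * L⁻¹ := star_left_conjugate_le_conjugate h _
      _ = L⁻¹ * X * L⁻¹ := by rw [hLinv]
  calc Y.det = Y.det * 1 := (mul_one _).symm
    _ ≤ Y.det * (L⁻¹ * X * L⁻¹).det :=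
      mul_le_mul_of_nonneg_left (one_le_det_of_one_le hM) hY.posSemidef.det_nonneg
    _ = X.det := by
      rw [det_mul, det_mul, det_nonsing_inv, ← hLL, det_mul, Ring.inverse_eq_inv']
      field_simp [hL.ne_zero]

theorem det_conjTranspose_mul_mul_le_of_mul_eq_mul [DecidableEq m] {l : Type*} [Fintype l]
    [DecidableEq l]
    {A : Matrix m m 𝕜} (hA : A.PosSemidef) {U : Matrix m n 𝕜} {D : Matrix n n 𝕜}
    (hU : Uᴴ * U = 1) (hAU : A * U = U * D) (B : Matrix m l 𝕜) :
    (Bᴴ * U * D * Uᴴ * B).det ≤ (Bᴴ * A * B).det := by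
  have hP := isStarProjection_mul_conjTranspose hU
  have hPAP : U * Uᴴ * A * (U * Uᴴ) = U * D * Uᴴ := by
    rw [Matrix.mul_assoc, Matrix.mul_assoc, ← Matrix.mul_assoc A, hAU, Matrix.mul_assoc,
      ← Matrix.mul_assoc Uᴴ, hU, Matrix.one_mul]
  have hle : U * D * Uᴴ ≤ A := by
    rw [← hPAP]
    exact hP.mul_mul_le_of_commute
      (commute_mul_conjTranspose_of_mul_eq_mul hA.isHermitian hU hAU) hA.nonneg
  have hnonneg : 0 ≤ U * D * Uᴴ := by
    rw [← hPAP]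
    exact hP.isSelfAdjoint.conjugate_nonneg hA.nonneg
  simpa only [Matrix.mul_assoc] using det_le_det_of_le
    (hnonneg.posSemidef.conjTranspose_mul_mul_same B).nonneg
    (conjTranspose_mul_mul_le_conjTranspose_mul_mul hle B)

end RCLike

end Matrix

theorem det_compression_ge_prod_eigenvalues_mul_alignment_general
    {Nt K : ℕ} (hKNt : K ≤ Nt)
    (A : Matrix (Fin Nt) (Fin Nt) ℂ) (hA : A.PosSemidef)
    (lam : Fin Nt → ℝ)
    (U₁ : Matrix (Fin Nt) (Fin K) ℂ)
    (hU₁orth : U₁ᴴ * U₁ = 1)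
    (hU₁eig : A * U₁ = U₁ * Matrix.diagonal (fun i : Fin K => (lam (Fin.castLE hKNt i) : ℂ)))
    (Pbar : Matrix (Fin Nt) (Fin K) ℂ) :
    (Pbarᴴ * A * Pbar).det.im = 0 ∧
    (Pbarᴴ * U₁ * U₁ᴴ * Pbar).det.im = 0 ∧
    0 ≤ (Pbarᴴ * U₁ * U₁ᴴ * Pbar).det.re ∧
    (∏ i : Fin K, lam (Fin.castLE hKNt i)) * (Pbarᴴ * U₁ * U₁ᴴ * Pbar).det.re ≤
      (Pbarᴴ * A * Pbar).det.re := by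
  set D := diagonal fun i : Fin K => (lam (Fin.castLE hKNt i) : ℂ)
  have hB : (Pbarᴴ * U₁ * U₁ᴴ * Pbar).PosSemidef := by
    simpa only [Matrix.mul_assoc] using
      (posSemidef_self_mul_conjTranspose U₁).conjTranspose_mul_mul_same Pbar
  have hdet : (Pbarᴴ * U₁ * D * U₁ᴴ * Pbar).det = D.det * (Pbarᴴ * U₁ * U₁ᴴ * Pbar).det := by
    rw [show Pbarᴴ * U₁ * D * U₁ᴴ * Pbar = Pbarᴴ * U₁ * D * (U₁ᴴ * Pbar) by
        simp only [Matrix.mul_assoc],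
      show Pbarᴴ * U₁ * U₁ᴴ * Pbar = Pbarᴴ * U₁ * (U₁ᴴ * Pbar) by simp only [Matrix.mul_assoc]]
    simp only [det_mul]
    ring
  have hle := det_conjTranspose_mul_mul_le_of_mul_eq_mul hA hU₁orth hU₁eig Pbar
  rw [hdet, det_diagonal, ← Complex.ofReal_prod] at hle
  obtain ⟨-, hAim⟩ := Complex.nonneg_iff.mp (hA.conjTranspose_mul_mul_same Pbar).det_nonneg
  obtain ⟨hBre, hBim⟩ := Complex.nonneg_iff.mp hB.det_nonneg
  refine ⟨hAim.symm, hBim.symm, hBre, ?_⟩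
  simpa only [Complex.re_ofReal_mul] using (Complex.le_def.mp hle).1

/-- Let `A` be Hermitian positive semidefinite with
eigenvalues `lam 1 ≥ … ≥ lam N_t ≥ 0`, and let `U₁` have orthonormal columns
that are eigenvectors of `A` for the `K` largest eigenvalues.  Then for every
`N_t × K` matrix `P̄` with orthonormal columns,
`det(P̄ᴴ A P̄) ≥ (∏_{i<K} lam i) · det(P̄ᴴ U₁ U₁ᴴ P̄)`, both determinants being
nonnegative reals. -/
theorem det_compression_ge_prod_eigenvalues_mul_alignment
    {Nt K : ℕ} (hKNt : K ≤ Nt)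
    (A : Matrix (Fin Nt) (Fin Nt) ℂ) (hA : A.PosSemidef)
    (lam : Fin Nt → ℝ) (hlam_anti : Antitone lam)
    (hlam : ∃ σ : Equiv.Perm (Fin Nt), lam = hA.isHermitian.eigenvalues ∘ σ)
    (U₁ : Matrix (Fin Nt) (Fin K) ℂ)
    (hU₁orth : U₁ᴴ * U₁ = 1)
    (hU₁eig : A * U₁ = U₁ * Matrix.diagonal (fun i : Fin K => (lam (Fin.castLE hKNt i) : ℂ)))
    (Pbar : Matrix (Fin Nt) (Fin K) ℂ) (hPbar : Pbarᴴ * Pbar = 1) :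
    (Pbarᴴ * A * Pbar).det.im = 0 ∧
    (Pbarᴴ * U₁ * U₁ᴴ * Pbar).det.im = 0 ∧
    0 ≤ (Pbarᴴ * U₁ * U₁ᴴ * Pbar).det.re ∧
    (∏ i : Fin K, lam (Fin.castLE hKNt i)) * (Pbarᴴ * U₁ * U₁ᴴ * Pbar).det.re ≤
      (Pbarᴴ * A * Pbar).det.re :=
  det_compression_ge_prod_eigenvalues_mul_alignment_general hKNt A hA lam U₁ hU₁orth hU₁eig Pbar
end
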